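/- arXiv:2506.17998 — 2 statements merged into one kernel-verified Lean document; each statement's English description precedes it below -/
import Mathlib

section
/- Let G = C_p for p prime, and let M be a dual rational coefficient system over the orbit category 𝒪_G, i.e., a covariant functor from 𝒪_G to graded ℚ-vector spaces. Then M is injective in the category Vec*_G if and only if the structure map M(G/e) → M(G/G) is surjective. -/
/-!
Since `p` is invertible in `ℚ`, averaging over `C_p` turns linear sections and retractions into
equivariant ones. If `f : M(G/e) → M(G/G)` is onto, it thus has a `C_p`-invariant section `s`, and
`M(G/e) = ker f ⊕ s(M(G/G))` as representations. To extend a morphism along a levelwise injection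
`X → Y`, extend it at `G/G` by any linear retraction and at `G/e` by an equivariant retraction
whose `s(M(G/G))`-component is then corrected to match the `G/G`-level.

Conversely, `M` embeds into the system with `G/e`-level `M(G/e) × M(G/G)` and structure map
`(x, v) ↦ f x + v`; a retraction of this embedding maps `(0, v)` to a preimage of `v`.
-/

open Function

/-- A diagram of graded `ℚ`-vector spaces over the orbit category `𝒪_{C_p}`:
a graded vector space at each of the two orbits `G/e`, `G/G`, a structure map,
and the Weyl group action of `C_p` at the level `G/e`. -/
structure CpSys (p : ℕ) where
  Me : ℕ → Type
  MG : ℕ → Type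
  [iMe : ∀ n, AddCommGroup (Me n)]
  [mMe : ∀ n, Module ℚ (Me n)]
  [iMG : ∀ n, AddCommGroup (MG n)]
  [mMG : ∀ n, Module ℚ (MG n)]
  f : ∀ n, Me n →ₗ[ℚ] MG n
  act : ∀ n, ZMod p → (Me n →ₗ[ℚ] Me n)
  act_zero : ∀ n x, act n 0 x = x
  act_add : ∀ n g h x, act n (g + h) x = act n g (act n h x)
  equiv : ∀ n g x, f n (act n g x) = f n x

attribute [instance] CpSys.iMe CpSys.mMe CpSys.iMG CpSys.mMG

/-- A morphism of diagrams over `𝒪_{C_p}`. -/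
structure CpHom {p : ℕ} (X Y : CpSys p) where
  he : ∀ n, X.Me n →ₗ[ℚ] Y.Me n
  hG : ∀ n, X.MG n →ₗ[ℚ] Y.MG n
  comm : ∀ n x, Y.f n (he n x) = hG n (X.f n x)
  act_comm : ∀ n g x, Y.act n g (he n x) = he n (X.act n g x)

/-- A morphism of diagrams is a monomorphism iff it is levelwise injective. -/
def CpHom.Mono {p : ℕ} {X Y : CpSys p} (i : CpHom X Y) : Prop :=
  (∀ n, Injective (i.he n)) ∧ (∀ n, Injective (i.hG n))

/-- Injectivity of an object of `Vec*_{C_p}`: every morphism into it extends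
along every monomorphism. -/
def CpSys.InjectiveObj {p : ℕ} (I : CpSys p) : Prop :=
  ∀ (X Y : CpSys p) (i : CpHom X Y), i.Mono → ∀ f : CpHom X I,
    ∃ g : CpHom Y I,
      (∀ n x, g.he n (i.he n x) = f.he n x) ∧
      (∀ n x, g.hG n (i.hG n x) = f.hG n x)

/-- A diagram of graded `ℚ`-vector spaces over the orbit category `𝒪_{C_{pq}}`:
graded vector spaces at the orbits `G/e`, `G/P`, `G/Q`, `G/G` (where `P`, `Q`
are the subgroups of order `p`, `q`), structure maps, and the Weyl group
actions (`G` on the `G/e` level, `G/P ≅ C_q` on the `G/P` level and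
`G/Q ≅ C_p` on the `G/Q` level). -/
structure CpqSys (p q : ℕ) where
  Me : ℕ → Type
  MP : ℕ → Type
  MQ : ℕ → Type
  MG : ℕ → Type
  [iMe : ∀ n, AddCommGroup (Me n)]
  [mMe : ∀ n, Module ℚ (Me n)]
  [iMP : ∀ n, AddCommGroup (MP n)]
  [mMP : ∀ n, Module ℚ (MP n)]
  [iMQ : ∀ n, AddCommGroup (MQ n)]
  [mMQ : ∀ n, Module ℚ (MQ n)]
  [iMG : ∀ n, AddCommGroup (MG n)]
  [mMG : ∀ n, Module ℚ (MG n)]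
  fEP : ∀ n, Me n →ₗ[ℚ] MP n
  fEQ : ∀ n, Me n →ₗ[ℚ] MQ n
  fPG : ∀ n, MP n →ₗ[ℚ] MG n
  fQG : ∀ n, MQ n →ₗ[ℚ] MG n
  comm : ∀ n x, fPG n (fEP n x) = fQG n (fEQ n x)
  acte : ∀ n, ZMod (p * q) → (Me n →ₗ[ℚ] Me n)
  actP : ∀ n, ZMod q → (MP n →ₗ[ℚ] MP n)
  actQ : ∀ n, ZMod p → (MQ n →ₗ[ℚ] MQ n)
  acte_zero : ∀ n x, acte n 0 x = x
  acte_add : ∀ n g h x, acte n (g + h) x = acte n g (acte n h x)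
  actP_zero : ∀ n x, actP n 0 x = x
  actP_add : ∀ n g h x, actP n (g + h) x = actP n g (actP n h x)
  actQ_zero : ∀ n x, actQ n 0 x = x
  actQ_add : ∀ n g h x, actQ n (g + h) x = actQ n g (actQ n h x)
  equivEP : ∀ n g x,
    fEP n (acte n g x) = actP n (ZMod.castHom (dvd_mul_left q p) (ZMod q) g) (fEP n x)
  equivEQ : ∀ n g x,
    fEQ n (acte n g x) = actQ n (ZMod.castHom (dvd_mul_right p q) (ZMod p) g) (fEQ n x)
  equivPG : ∀ n g x, fPG n (actP n g x) = fPG n x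
  equivQG : ∀ n g x, fQG n (actQ n g x) = fQG n x

attribute [instance] CpqSys.iMe CpqSys.mMe CpqSys.iMP CpqSys.mMP
attribute [instance] CpqSys.iMQ CpqSys.mMQ CpqSys.iMG CpqSys.mMG

/-- A morphism of diagrams over `𝒪_{C_{pq}}`. -/
structure CpqHom {p q : ℕ} (X Y : CpqSys p q) where
  he : ∀ n, X.Me n →ₗ[ℚ] Y.Me n
  hP : ∀ n, X.MP n →ₗ[ℚ] Y.MP n
  hQ : ∀ n, X.MQ n →ₗ[ℚ] Y.MQ n
  hG : ∀ n, X.MG n →ₗ[ℚ] Y.MG n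
  commEP : ∀ n x, Y.fEP n (he n x) = hP n (X.fEP n x)
  commEQ : ∀ n x, Y.fEQ n (he n x) = hQ n (X.fEQ n x)
  commPG : ∀ n x, Y.fPG n (hP n x) = hG n (X.fPG n x)
  commQG : ∀ n x, Y.fQG n (hQ n x) = hG n (X.fQG n x)
  acte_comm : ∀ n g x, Y.acte n g (he n x) = he n (X.acte n g x)
  actP_comm : ∀ n g x, Y.actP n g (hP n x) = hP n (X.actP n g x)
  actQ_comm : ∀ n g x, Y.actQ n g (hQ n x) = hQ n (X.actQ n g x)

/-- Levelwise injectivity (= monomorphism in the diagram category). -/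
def CpqHom.Mono {p q : ℕ} {X Y : CpqSys p q} (i : CpqHom X Y) : Prop :=
  (∀ n, Injective (i.he n)) ∧ (∀ n, Injective (i.hP n)) ∧
    (∀ n, Injective (i.hQ n)) ∧ (∀ n, Injective (i.hG n))

/-- Injectivity of an object of `Vec*_{C_{pq}}`. -/
def CpqSys.InjectiveObj {p q : ℕ} (I : CpqSys p q) : Prop :=
  ∀ (X Y : CpqSys p q) (i : CpqHom X Y), i.Mono → ∀ f : CpqHom X I,
    ∃ g : CpqHom Y I,
      (∀ n x, g.he n (i.he n x) = f.he n x) ∧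
      (∀ n x, g.hP n (i.hP n x) = f.hP n x) ∧
      (∀ n x, g.hQ n (i.hQ n x) = f.hQ n x) ∧
      (∀ n x, g.hG n (i.hG n x) = f.hG n x)

/-- **Property I**: the two structure maps into the `G/G`-level are surjective,
and the induced map from the `G/e`-level into the pullback
`𝒦 = 𝒜(G/P) ×_{𝒜(G/G)} 𝒜(G/Q)` is surjective. -/
def CpqSys.PropertyI {p q : ℕ} (A : CpqSys p q) : Prop :=
  (∀ n, Surjective (A.fPG n)) ∧ (∀ n, Surjective (A.fQG n)) ∧
    (∀ n (a : A.MP n) (b : A.MQ n), A.fPG n a = A.fQG n b →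
      ∃ x : A.Me n, A.fEP n x = a ∧ A.fEQ n x = b)
namespace Representation

section CommRing

variable {k G V W : Type*} [CommRing k] [Group G] [Fintype G] [Invertible (Fintype.card G : k)]
  [AddCommGroup V] [Module k V] [AddCommGroup W] [Module k W]
  {ρ : Representation k G V} {σ : Representation k G W}

theorem averageMap_apply (v : V) :
    ρ.averageMap v = ⅟(Fintype.card G : k) • ∑ g : G, ρ g v := by
  simp [GroupAlgebra.average, map_sum]

theorem IsIntertwiningMap.map_averageMap {f : V →ₗ[k] W} (hf : ρ.IsIntertwiningMap σ f)
    (v : V) : f (ρ.averageMap v) = σ.averageMap (f v) := by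
  simp only [averageMap_apply, map_smul, map_sum, hf.isIntertwining]

end CommRing

section Field

variable {k G V W U : Type*} [Field k] [Group G] [Fintype G] [Invertible (Fintype.card G : k)]
  [AddCommGroup V] [Module k V] [AddCommGroup W] [Module k W] [AddCommGroup U] [Module k U]
  {ρ : Representation k G V} {σ : Representation k G W}

theorem exists_isIntertwiningMap_leftInverse {i : V →ₗ[k] W} (hi : ρ.IsIntertwiningMap σ i)
    (hinj : Injective i) :
    ∃ r : W →ₗ[k] V, σ.IsIntertwiningMap ρ r ∧ r ∘ₗ i = LinearMap.id := by
  obtain ⟨r₀, hr₀⟩ := i.exists_leftInverse_of_injective (LinearMap.ker_eq_bot.mpr hinj)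
  refine ⟨(linHom σ ρ).averageMap r₀,
    (mem_linHom_invariants_iff_isIntertwining _).mp ((linHom σ ρ).averageMap_invariant r₀), ?_⟩
  have hprecomp : (linHom σ ρ).IsIntertwiningMap (linHom ρ ρ) (LinearMap.lcomp k V i) :=
    ⟨fun g f => by ext v; simp [linHom_apply, hi.isIntertwining]⟩
  have hid : LinearMap.id ∈ (linHom ρ ρ).invariants := fun g => by ext v; simp [linHom_apply]
  calc (linHom σ ρ).averageMap r₀ ∘ₗ i = (linHom ρ ρ).averageMap (r₀ ∘ₗ i) :=
        hprecomp.map_averageMap r₀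
    _ = LinearMap.id := by rw [hr₀, averageMap_id _ _ hid]

theorem exists_rightInverse_mem_invariants {f : V →ₗ[k] U}
    (hf : ρ.IsIntertwiningMap (trivial k G U) f) (hsurj : Surjective f) :
    ∃ s : U →ₗ[k] V, (∀ u, s u ∈ ρ.invariants) ∧ f ∘ₗ s = LinearMap.id := by
  obtain ⟨s₀, hs₀⟩ := f.exists_rightInverse_of_surjective (LinearMap.range_eq_top.mpr hsurj)
  refine ⟨ρ.averageMap ∘ₗ s₀, fun u => ρ.averageMap_invariant (s₀ u), LinearMap.ext fun u => ?_⟩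
  have htriv : f (s₀ u) ∈ (trivial k G U).invariants := fun _ => rfl
  simp only [LinearMap.comp_apply, hf.map_averageMap, averageMap_id _ _ htriv, LinearMap.id_apply]
  exact LinearMap.congr_fun hs₀ u

end Field

end Representation

namespace CpSys

variable {p : ℕ}

def rep (M : CpSys p) (n : ℕ) : Representation ℚ (Multiplicative (ZMod p)) (M.Me n) where
  toFun g := M.act n g.toAdd
  map_one' := LinearMap.ext (M.act_zero n)
  map_mul' g h := LinearMap.ext (M.act_add n g.toAdd h.toAdd)

theorem rep_apply (M : CpSys p) (n : ℕ) (g : Multiplicative (ZMod p)) :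
    M.rep n g = M.act n g.toAdd :=
  rfl

theorem isIntertwiningMap_f (M : CpSys p) (n : ℕ) :
    (M.rep n).IsIntertwiningMap (Representation.trivial ℚ _ (M.MG n)) (M.f n) :=
  ⟨fun g => M.equiv n g.toAdd⟩

end CpSys

namespace CpHom

variable {p : ℕ}

def id (M : CpSys p) : CpHom M M where
  he _ := LinearMap.id
  hG _ := LinearMap.id
  comm _ _ := rfl
  act_comm _ _ _ := rfl

theorem isIntertwiningMap_he {X Y : CpSys p} (φ : CpHom X Y) (n : ℕ) :
    (X.rep n).IsIntertwiningMap (Y.rep n) (φ.he n) :=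
  ⟨fun g x => (φ.act_comm n g.toAdd x).symm⟩

end CpHom

namespace CpSys

variable {p : ℕ}

def adjoinBase (M : CpSys p) : CpSys p where
  Me n := M.Me n × M.MG n
  MG := M.MG
  f n := (M.f n).coprod LinearMap.id
  act n g := (M.act n g).prodMap LinearMap.id
  act_zero n x := by simp [M.act_zero]
  act_add n g h x := by simp [M.act_add]
  equiv n g x := by simp [M.equiv]

theorem adjoinBase_f_apply (M : CpSys p) (n : ℕ) (x : M.Me n) (v : M.MG n) :
    M.adjoinBase.f n (x, v) = M.f n x + v :=
  rfl

def inlAdjoinBase (M : CpSys p) : CpHom M M.adjoinBase where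
  he _ := LinearMap.inl ℚ _ _
  hG _ := LinearMap.id
  comm n x := (M.adjoinBase_f_apply n x 0).trans (add_zero _)
  act_comm _ _ _ := rfl

theorem inlAdjoinBase_mono (M : CpSys p) : M.inlAdjoinBase.Mono :=
  ⟨fun _ => LinearMap.inl_injective, fun _ => injective_id⟩

theorem InjectiveObj.surjective {M : CpSys p} (hM : M.InjectiveObj) (n : ℕ) :
    Surjective (M.f n) := by
  obtain ⟨g, -, hgG⟩ := hM _ _ M.inlAdjoinBase M.inlAdjoinBase_mono (CpHom.id M)
  intro v
  refine ⟨g.he n (0, v), (g.comm n (0, v)).trans ?_⟩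
  rw [adjoinBase_f_apply, map_zero, zero_add]
  exact hgG n v

theorem exists_extension_of_invariant_section {X Y M : CpSys p} (i : CpHom X Y) (φ : CpHom X M)
    (s : ∀ n, M.MG n →ₗ[ℚ] M.Me n) (hs : ∀ n v, s n v ∈ (M.rep n).invariants)
    (hfs : ∀ n v, M.f n (s n v) = v)
    (α : ∀ n, Y.Me n →ₗ[ℚ] M.Me n) (hα : ∀ n, (Y.rep n).IsIntertwiningMap (M.rep n) (α n))
    (hαi : ∀ n x, α n (i.he n x) = φ.he n x)
    (β : ∀ n, Y.MG n →ₗ[ℚ] M.MG n) (hβi : ∀ n v, β n (i.hG n v) = φ.hG n v) :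
    ∃ g : CpHom Y M,
      (∀ n x, g.he n (i.he n x) = φ.he n x) ∧ (∀ n x, g.hG n (i.hG n x) = φ.hG n x) := by
  -- `M.Me n = ker (M.f n) ⊕ range (s n)` equivariantly: keep the kernel component of `α` and
  -- replace the other one by the one that `β` forces.
  let ge n : Y.Me n →ₗ[ℚ] M.Me n := α n - s n ∘ₗ M.f n ∘ₗ α n + s n ∘ₗ β n ∘ₗ Y.f n
  have ge_apply n y : ge n y = α n y - s n (M.f n (α n y)) + s n (β n (Y.f n y)) := rfl
  refine ⟨⟨ge, β, fun n y => ?comm, fun n g y => ?act_comm⟩, fun n x => ?ext_he, hβi⟩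
  case comm => simp only [ge_apply, map_add, map_sub, hfs, sub_self, zero_add]
  case act_comm =>
    have hαg := (hα n).isIntertwining (Multiplicative.ofAdd g) y
    have hsg v := hs n v (Multiplicative.ofAdd g)
    simp only [rep_apply, toAdd_ofAdd] at hαg hsg
    simp only [ge_apply, map_add, map_sub, hsg, hαg, M.equiv, Y.equiv]
  case ext_he =>
    rw [ge_apply, hαi, i.comm, hβi, ← φ.comm]
    abel

theorem injectiveObj_of_surjective [NeZero p] (M : CpSys p)
    (hM : ∀ n, Surjective (M.f n)) : M.InjectiveObj := by
  intro X Y i hi φ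
  choose s hs hfs using fun n =>
    (M.rep n).exists_rightInverse_mem_invariants (M.isIntertwiningMap_f n) (hM n)
  choose r hr hri using fun n =>
    Representation.exists_isIntertwiningMap_leftInverse (i.isIntertwiningMap_he n) (hi.1 n)
  choose ρ hρi using fun n =>
    (i.hG n).exists_leftInverse_of_injective (LinearMap.ker_eq_bot.mpr (hi.2 n))
  refine exists_extension_of_invariant_section i φ s hs (fun n => LinearMap.congr_fun (hfs n))
    (fun n => φ.he n ∘ₗ r n) (fun n => ⟨fun g y => ?_⟩) (fun n x => ?_)
    (fun n => φ.hG n ∘ₗ ρ n) (fun n v => ?_)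
  · simp only [LinearMap.comp_apply, (hr n).isIntertwining,
      (φ.isIntertwiningMap_he n).isIntertwining]
  · simp only [LinearMap.comp_apply, ← LinearMap.comp_apply (r n), hri, LinearMap.id_apply]
  · simp only [LinearMap.comp_apply, ← LinearMap.comp_apply (ρ n), hρi, LinearMap.id_apply]

end CpSys

/-- For `G = C_p` (`p` prime), a dual rational coefficient
system `M` over the orbit category `𝒪_G` is injective in `Vec*_G` if and only
if the structure map `M(G/e) → M(G/G)` is surjective. -/
theorem cp_injective_iff_surjective {p : ℕ} (hp : p.Prime) (M : CpSys p) :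
    M.InjectiveObj ↔ ∀ n, Function.Surjective (M.f n) :=
  haveI : NeZero p := ⟨hp.ne_zero⟩
  ⟨fun hM => hM.surjective, M.injectiveObj_of_surjective⟩
end

section
/- Let G = C_{pq} with p, q distinct primes, with subgroups e, P, Q, G of orders 1, p, q, pq. If a covariant functor 𝒜 : 𝒪_G → grVec_ℚ satisfies Property I (the structure maps 𝒜(G/P) → 𝒜(G/G) and 𝒜(G/Q) → 𝒜(G/G) are surjective, and the induced map 𝒜(G/e) → 𝒦 into the pullback 𝒦 of 𝒜(G/P) → 𝒜(G/G) ← 𝒜(G/Q) is surjective), then 𝒜 is an injective object in the category Vec*_G of covariant functors 𝒪_G → grVec_ℚ. -/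
open Function

/-!
Everything happens degreewise and level by level, from `G/G` down to `G/e`. Each level of a
diagram is a `ℚ`-representation of its Weyl group, and a linear solution of a problem "extend
along a monomorphism and lift through a map" between representations of a finite group can be
averaged into an equivariant one. At `G/P` and `G/Q` the lifting is through the surjections onto
`𝒜(G/G)`; at `G/e` it is through `𝒜(G/e) → 𝒦`, which is possible because the maps already built
at `G/P` and `G/Q` agree over `G/G`, so that the value to be lifted lies in `𝒦`.
-/

namespace LinearMap

variable {K S T V W : Type*} [DivisionRing K] [AddCommGroup S] [Module K S]
  [AddCommGroup T] [Module K T] [AddCommGroup V] [Module K V] [AddCommGroup W] [Module K W]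

theorem exists_comp_eq_of_range_le (π : V →ₗ[K] W) (H : T →ₗ[K] W) (h : range H ≤ range π) :
    ∃ L : T →ₗ[K] V, π ∘ₗ L = H := by
  obtain ⟨L, hL⟩ := Module.projective_lifting_property π.rangeRestrict
    (H.codRestrict _ fun y => h (mem_range_self H y)) π.surjective_rangeRestrict
  exact ⟨L, ext fun y => congr(((↑) : range π → W) ($hL y))⟩

theorem exists_extend_lift (i : S →ₗ[K] T) (hi : Injective i) (π : V →ₗ[K] W)
    (F : S →ₗ[K] V) (H : T →ₗ[K] W) (hFH : π ∘ₗ F = H ∘ₗ i) (hH : range H ≤ range π) :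
    ∃ E : T →ₗ[K] V, E ∘ₗ i = F ∧ π ∘ₗ E = H := by
  obtain ⟨r, hr⟩ := i.exists_leftInverse_of_injective (ker_eq_bot.2 hi)
  obtain ⟨L, hL⟩ := π.exists_comp_eq_of_range_le H hH
  refine ⟨L + (F - L ∘ₗ i) ∘ₗ r, ?_, ?_⟩
  · rw [add_comp, comp_assoc, hr, comp_id, add_sub_cancel]
  · rw [comp_add, ← comp_assoc, comp_sub, ← comp_assoc, hL, hFH, sub_self, zero_comp, add_zero]

end LinearMap

namespace Representation

def ofAdditive {k A V : Type*} [CommSemiring k] [AddMonoid A] [AddCommMonoid V] [Module k V]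
    (a : A → V →ₗ[k] V) (h0 : ∀ x, a 0 x = x) (hadd : ∀ g h x, a (g + h) x = a g (a h x)) :
    Representation k (Multiplicative A) V where
  toFun g := a g.toAdd
  map_one' := LinearMap.ext h0
  map_mul' g h := LinearMap.ext (hadd g.toAdd h.toAdd)

section Intertwining

variable {k G S T V W : Type*} [CommRing k] [Group G]
  [AddCommGroup S] [Module k S] [AddCommGroup T] [Module k T]
  [AddCommGroup V] [Module k V] [AddCommGroup W] [Module k W]
  {ρS : Representation k G S} {ρT : Representation k G T}
  {ρV : Representation k G V} {ρW : Representation k G W}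

theorem IsIntertwiningMap.lcomp {i : S →ₗ[k] T} (hi : IsIntertwiningMap ρS ρT i) :
    IsIntertwiningMap (linHom ρT ρV) (linHom ρS ρV) (LinearMap.lcomp k V i) :=
  ⟨fun g E => LinearMap.ext fun x => by simp [linHom_apply, hi.isIntertwining]⟩

theorem IsIntertwiningMap.compRight {π : V →ₗ[k] W} (hπ : IsIntertwiningMap ρV ρW π) :
    IsIntertwiningMap (linHom ρT ρV) (linHom ρT ρW) (LinearMap.compRight k π) :=
  ⟨fun g E => LinearMap.ext fun x => by simp [linHom_apply, hπ.isIntertwining]⟩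

variable [Fintype G] [Invertible (Fintype.card G : k)]

theorem IsIntertwiningMap.map_averageMap_s9 {Φ : V →ₗ[k] W} (hΦ : IsIntertwiningMap ρV ρW Φ)
    (v : V) : Φ (averageMap ρV v) = averageMap ρW (Φ v) := by
  simp [GroupAlgebra.average, map_sum, hΦ.isIntertwining]

theorem isIntertwiningMap_averageMap_linHom (E : T →ₗ[k] V) :
    IsIntertwiningMap ρT ρV (averageMap (linHom ρT ρV) E) :=
  (mem_linHom_invariants_iff_isIntertwining _).1 fun g => by
    simpa [linHom_apply] using averageMap_invariant (linHom ρT ρV) E g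

theorem IsIntertwiningMap.averageMap_linHom_eq {F : S →ₗ[k] V}
    (hF : IsIntertwiningMap ρS ρV F) : averageMap (linHom ρS ρV) F = F :=
  averageMap_id _ F fun g => by
    simpa [linHom_apply] using (mem_linHom_invariants_iff_isIntertwining F).2 hF g

end Intertwining

variable {k G S T V W : Type*} [Field k] [Group G] [Fintype G] [Invertible (Fintype.card G : k)]
  [AddCommGroup S] [Module k S] [AddCommGroup T] [Module k T]
  [AddCommGroup V] [Module k V] [AddCommGroup W] [Module k W]
  {ρS : Representation k G S} {ρT : Representation k G T}
  {ρV : Representation k G V} {ρW : Representation k G W}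

theorem exists_isIntertwiningMap_extend_lift {i : S →ₗ[k] T} (hi_inj : Injective i)
    (hi : IsIntertwiningMap ρS ρT i) {π : V →ₗ[k] W} (hπ : IsIntertwiningMap ρV ρW π)
    {F : S →ₗ[k] V} (hF : IsIntertwiningMap ρS ρV F)
    {H : T →ₗ[k] W} (hH : IsIntertwiningMap ρT ρW H)
    (hFH : π ∘ₗ F = H ∘ₗ i) (hHπ : LinearMap.range H ≤ LinearMap.range π) :
    ∃ E : T →ₗ[k] V, IsIntertwiningMap ρT ρV E ∧ E ∘ₗ i = F ∧ π ∘ₗ E = H := by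
  obtain ⟨E, hEi, hπE⟩ := LinearMap.exists_extend_lift i hi_inj π F H hFH hHπ
  refine ⟨averageMap (linHom ρT ρV) E, isIntertwiningMap_averageMap_linHom E, ?_, ?_⟩
  · have := (hi.lcomp (ρV := ρV)).map_averageMap_s9 E
    simp only [LinearMap.lcomp_apply'] at this
    rw [this, hEi, hF.averageMap_linHom_eq]
  · have := (hπ.compRight (ρT := ρT)).map_averageMap_s9 E
    simp only [LinearMap.compRight_apply] at this
    rw [this, hπE, hH.averageMap_linHom_eq]

end Representation

instance {k G : Type*} [DivisionRing k] [CharZero k] [Fintype G] [Nonempty G] :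
    Invertible (Fintype.card G : k) :=
  invertibleOfNonzero (Nat.cast_ne_zero.2 Fintype.card_ne_zero)

namespace CpqSys

open Representation

variable {p q : ℕ} (A : CpqSys p q) (n : ℕ)

def repE : Representation ℚ (Multiplicative (ZMod (p * q))) (A.Me n) :=
  ofAdditive (A.acte n) (A.acte_zero n) (A.acte_add n)

def repP : Representation ℚ (Multiplicative (ZMod q)) (A.MP n) :=
  ofAdditive (A.actP n) (A.actP_zero n) (A.actP_add n)

def repQ : Representation ℚ (Multiplicative (ZMod p)) (A.MQ n) :=
  ofAdditive (A.actQ n) (A.actQ_zero n) (A.actQ_add n)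

noncomputable def repPQ : Representation ℚ (Multiplicative (ZMod (p * q))) (A.MP n × A.MQ n) :=
  Representation.prod
    ((A.repP n).comp (ZMod.castHom (dvd_mul_left q p) (ZMod q)).toAddMonoidHom.toMultiplicative)
    ((A.repQ n).comp (ZMod.castHom (dvd_mul_right p q) (ZMod p)).toAddMonoidHom.toMultiplicative)

theorem isIntertwiningMap_fPG :
    IsIntertwiningMap (A.repP n) (trivial ℚ _ _) (A.fPG n) :=
  ⟨fun g x => A.equivPG n g.toAdd x⟩

theorem isIntertwiningMap_fQG :
    IsIntertwiningMap (A.repQ n) (trivial ℚ _ _) (A.fQG n) :=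
  ⟨fun g x => A.equivQG n g.toAdd x⟩

theorem isIntertwiningMap_fEP_prod_fEQ :
    IsIntertwiningMap (A.repE n) (A.repPQ n) ((A.fEP n).prod (A.fEQ n)) :=
  ⟨fun g x => Prod.ext (A.equivEP n g.toAdd x) (A.equivEQ n g.toAdd x)⟩

end CpqSys

namespace CpqHom

open Representation LinearMap

variable {p q : ℕ} {X Y : CpqSys p q}

theorem isIntertwiningMap_he (f : CpqHom X Y) (n : ℕ) :
    IsIntertwiningMap (X.repE n) (Y.repE n) (f.he n) :=
  ⟨fun g x => (f.acte_comm n g.toAdd x).symm⟩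

theorem isIntertwiningMap_hP (f : CpqHom X Y) (n : ℕ) :
    IsIntertwiningMap (X.repP n) (Y.repP n) (f.hP n) :=
  ⟨fun g x => (f.actP_comm n g.toAdd x).symm⟩

theorem isIntertwiningMap_hQ (f : CpqHom X Y) (n : ℕ) :
    IsIntertwiningMap (X.repQ n) (Y.repQ n) (f.hQ n) :=
  ⟨fun g x => (f.actQ_comm n g.toAdd x).symm⟩

variable {A : CpqSys p q} (i : CpqHom X Y) (f : CpqHom X A) (n : ℕ)

theorem exists_extend_hG (hi : Injective (i.hG n)) :
    ∃ gG : Y.MG n →ₗ[ℚ] A.MG n, gG ∘ₗ i.hG n = f.hG n := by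
  obtain ⟨r, hr⟩ := (i.hG n).exists_leftInverse_of_injective (ker_eq_bot.2 hi)
  exact ⟨f.hG n ∘ₗ r, by rw [LinearMap.comp_assoc, hr, LinearMap.comp_id]⟩

theorem exists_extend_hP [NeZero q] (hA : Surjective (A.fPG n)) (hi : Injective (i.hP n))
    {gG : Y.MG n →ₗ[ℚ] A.MG n} (hgG : gG ∘ₗ i.hG n = f.hG n) :
    ∃ gP : Y.MP n →ₗ[ℚ] A.MP n, IsIntertwiningMap (Y.repP n) (A.repP n) gP ∧
      gP ∘ₗ i.hP n = f.hP n ∧ A.fPG n ∘ₗ gP = gG ∘ₗ Y.fPG n :=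
  exists_isIntertwiningMap_extend_lift hi (i.isIntertwiningMap_hP n)
    (A.isIntertwiningMap_fPG n) (f.isIntertwiningMap_hP n)
    ⟨fun g y => congrArg gG (Y.equivPG n g.toAdd y)⟩
    (ext fun x => by simp [f.commPG, i.commPG, ← hgG])
    (by rw [range_eq_top.2 hA]; exact le_top)

theorem exists_extend_hQ [NeZero p] (hA : Surjective (A.fQG n)) (hi : Injective (i.hQ n))
    {gG : Y.MG n →ₗ[ℚ] A.MG n} (hgG : gG ∘ₗ i.hG n = f.hG n) :
    ∃ gQ : Y.MQ n →ₗ[ℚ] A.MQ n, IsIntertwiningMap (Y.repQ n) (A.repQ n) gQ ∧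
      gQ ∘ₗ i.hQ n = f.hQ n ∧ A.fQG n ∘ₗ gQ = gG ∘ₗ Y.fQG n :=
  exists_isIntertwiningMap_extend_lift hi (i.isIntertwiningMap_hQ n)
    (A.isIntertwiningMap_fQG n) (f.isIntertwiningMap_hQ n)
    ⟨fun g y => congrArg gG (Y.equivQG n g.toAdd y)⟩
    (ext fun x => by simp [f.commQG, i.commQG, ← hgG])
    (by rw [range_eq_top.2 hA]; exact le_top)

theorem exists_extend_he [NeZero p] [NeZero q] (hA : A.PropertyI) (hi : Injective (i.he n))
    {gP : Y.MP n →ₗ[ℚ] A.MP n} {gQ : Y.MQ n →ₗ[ℚ] A.MQ n} {gG : Y.MG n →ₗ[ℚ] A.MG n}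
    (hgP : IsIntertwiningMap (Y.repP n) (A.repP n) gP) (hgP_i : gP ∘ₗ i.hP n = f.hP n)
    (hgP_G : A.fPG n ∘ₗ gP = gG ∘ₗ Y.fPG n)
    (hgQ : IsIntertwiningMap (Y.repQ n) (A.repQ n) gQ) (hgQ_i : gQ ∘ₗ i.hQ n = f.hQ n)
    (hgQ_G : A.fQG n ∘ₗ gQ = gG ∘ₗ Y.fQG n) :
    ∃ gE : Y.Me n →ₗ[ℚ] A.Me n, IsIntertwiningMap (Y.repE n) (A.repE n) gE ∧
      gE ∘ₗ i.he n = f.he n ∧ A.fEP n ∘ₗ gE = gP ∘ₗ Y.fEP n ∧ A.fEQ n ∘ₗ gE = gQ ∘ₗ Y.fEQ n := by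
  have hrange :
      range ((gP ∘ₗ Y.fEP n).prod (gQ ∘ₗ Y.fEQ n)) ≤ range ((A.fEP n).prod (A.fEQ n)) := by
    rintro _ ⟨y, rfl⟩
    obtain ⟨x, hxP, hxQ⟩ := hA.2.2 n (gP (Y.fEP n y)) (gQ (Y.fEQ n y)) (by
      rw [← comp_apply (A.fPG n), ← comp_apply (A.fQG n), hgP_G, hgQ_G]
      simp [Y.comm])
    exact ⟨x, Prod.ext hxP hxQ⟩
  obtain ⟨gE, hgE, hgE_i, hgE_PQ⟩ := exists_isIntertwiningMap_extend_lift hi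
    (i.isIntertwiningMap_he n) (A.isIntertwiningMap_fEP_prod_fEQ n) (f.isIntertwiningMap_he n)
    (H := (gP ∘ₗ Y.fEP n).prod (gQ ∘ₗ Y.fEQ n))
    ⟨fun g y => Prod.ext
      ((congrArg gP (Y.equivEP n g.toAdd y)).trans (hgP.isIntertwining _ _))
      ((congrArg gQ (Y.equivEQ n g.toAdd y)).trans (hgQ.isIntertwining _ _))⟩
    (ext fun x => Prod.ext (by simp [f.commEP, i.commEP, ← hgP_i])
      (by simp [f.commEQ, i.commEQ, ← hgQ_i]))
    hrange
  exact ⟨gE, hgE, hgE_i, congr(fst ℚ _ _ ∘ₗ $hgE_PQ), congr(snd ℚ _ _ ∘ₗ $hgE_PQ)⟩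

end CpqHom

theorem propertyI_implies_injective_general {p q : ℕ} (hp : p.Prime) (hq : q.Prime)
    (A : CpqSys p q) (hA : A.PropertyI) : A.InjectiveObj := by
  intro X Y i ⟨hiE, hiP, hiQ, hiG⟩ f
  have : NeZero p := ⟨hp.ne_zero⟩
  have : NeZero q := ⟨hq.ne_zero⟩
  choose gG hgG using fun n => i.exists_extend_hG f n (hiG n)
  choose gP hgP hgP_i hgP_G using fun n => i.exists_extend_hP f n (hA.1 n) (hiP n) (hgG n)
  choose gQ hgQ hgQ_i hgQ_G using fun n => i.exists_extend_hQ f n (hA.2.1 n) (hiQ n) (hgG n)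
  choose gE hgE hgE_i hgE_P hgE_Q using fun n => i.exists_extend_he f n hA (hiE n)
    (hgP n) (hgP_i n) (hgP_G n) (hgQ n) (hgQ_i n) (hgQ_G n)
  refine ⟨{ he := gE
            hP := gP
            hQ := gQ
            hG := gG
            commEP := fun n => LinearMap.congr_fun (hgE_P n)
            commEQ := fun n => LinearMap.congr_fun (hgE_Q n)
            commPG := fun n => LinearMap.congr_fun (hgP_G n)
            commQG := fun n => LinearMap.congr_fun (hgQ_G n)
            acte_comm := fun n g x => ((hgE n).isIntertwining (.ofAdd g) x).symm
            actP_comm := fun n g x => ((hgP n).isIntertwining (.ofAdd g) x).symm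
            actQ_comm := fun n g x => ((hgQ n).isIntertwining (.ofAdd g) x).symm },
    fun n => LinearMap.congr_fun (hgE_i n), fun n => LinearMap.congr_fun (hgP_i n),
    fun n => LinearMap.congr_fun (hgQ_i n), fun n => LinearMap.congr_fun (hgG n)⟩

/-- For `G = C_{pq}` with `p, q` distinct primes, a diagram of
graded `ℚ`-vector spaces over `𝒪_G` satisfying Property I is an injective
object of `Vec*_G`. -/
theorem propertyI_implies_injective {p q : ℕ} (hp : p.Prime) (hq : q.Prime)
    (hpq : p ≠ q) (A : CpqSys p q) (hA : A.PropertyI) : A.InjectiveObj :=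
  propertyI_implies_injective_general hp hq A hA
end
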